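/- Let d ≥ 2 and for each i ∈ {1,…,n} let κ_i be a permutation of (Z/dZ)^n acting as a d-cycle on the i-th coordinate only. Let f : (Z/dZ)^n → Z/dZ and let |ψ⟩ be any unit vector in C^(d^n) satisfying S_{f,κ_i}|ψ⟩ = |ψ⟩ for all i, where S_{f,κ_i} = X_{κ_i} Z_{f∘κ_i − f}. Then |ψ⟩ equals |f⟩ = d^(-n/2) Σ_x ω^(f(x))|x⟩ up to a global phase. -/

import Mathlib

/-!
The stabilizer condition for `κ_i` says `ψ (κ_i y) = ω^(f (κ_i y) - f y) ψ y`, i.e. the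
function `φ x = ψ x ω^(-f x)` is invariant under every `κ_i`. Since `κ_i` is a full `d`-cycle
on the `i`-th coordinate, its powers realise every change of that coordinate, so `φ` is
invariant under all single-coordinate updates and hence constant. Thus `ψ = c₀ ω^f`, and
normalisation forces `|c₀| = d^(-n/2)`.
-/

open Function

theorem Matrix.mulVec_of_ite_perm_apply {ι R : Type*} [Fintype ι] [DecidableEq ι] [Semiring R]
    (π : Equiv.Perm ι) (v : ι → R) (y : ι) :
    (Matrix.of fun x z => if x = π z then (1 : R) else 0).mulVec v (π y) = v y := by
  simp [Matrix.mulVec, dotProduct, π.injective.eq_iff]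

theorem apply_eq_apply_of_update_invariant {ι β : Type*} [Fintype ι] [DecidableEq ι]
    {α : ι → Type*} {g : (∀ i, α i) → β} (hg : ∀ x i b, g (update x i b) = g x)
    (x y : ∀ i, α i) : g x = g y := by
  have hpiecewise : ∀ s : Finset ι, g (s.piecewise y x) = g x := by
    intro s
    induction s using Finset.induction_on with
    | empty => rw [Finset.piecewise_empty]
    | insert j s _ ih => rw [Finset.piecewise_insert, hg, ih]
  rw [← hpiecewise Finset.univ, Finset.piecewise_univ]

theorem apply_pow_apply_of_invariant {α β : Type*} {g : α → β} {π : Equiv.Perm α}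
    (hg : ∀ y, g (π y) = g y) (m : ℕ) (y : α) : g ((π ^ m) y) = g y := by
  induction m with
  | zero => rfl
  | succ m ih => rw [pow_succ', Equiv.Perm.mul_apply, hg, ih]

theorem Equiv.piCongrRight_ite_apply {ι α : Type*} [DecidableEq ι] (i : ι) (σ : Equiv.Perm α)
    (x : ι → α) :
    piCongrRight (fun j => if j = i then σ else Equiv.refl α) x = update x i (σ (x i)) := by
  ext j
  by_cases hj : j = i
  · subst hj; simp
  · simp [hj]

theorem Equiv.piCongrRight_ite_pow_apply {ι α : Type*} [DecidableEq ι] (i : ι)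
    (σ : Equiv.Perm α) (m : ℕ) (x : ι → α) :
    (piCongrRight (fun j => if j = i then σ else Equiv.refl α) ^ m) x =
      update x i ((σ ^ m) (x i)) := by
  induction m with
  | zero => simp
  | succ m ih =>
    rw [pow_succ', Equiv.Perm.mul_apply, ih, piCongrRight_ite_apply, update_idem, update_self,
      pow_succ', Equiv.Perm.mul_apply]

theorem Equiv.Perm.IsCycle.exists_pow_apply_eq_of_support_eq_univ {α : Type*} [Fintype α]
    [DecidableEq α] {σ : Equiv.Perm α} (hσ : σ.IsCycle) (hsupp : σ.support = Finset.univ)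
    (a b : α) : ∃ m : ℕ, (σ ^ m) a = b := by
  have hmoves : ∀ c, σ c ≠ c := fun c =>
    Equiv.Perm.mem_support.mp (hsupp ▸ Finset.mem_univ c)
  exact hσ.exists_pow_eq (hmoves a) (hmoves b)

theorem apply_update_eq_of_invariant_piCongrRight_ite {ι α β : Type*} [DecidableEq ι]
    [Fintype α] [DecidableEq α] {g : (ι → α) → β} {i : ι} {σ : Equiv.Perm α}
    (hσ : σ.IsCycle) (hsupp : σ.support = Finset.univ)
    (hg : ∀ y, g (Equiv.piCongrRight (fun j => if j = i then σ else Equiv.refl α) y) = g y)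
    (x : ι → α) (b : α) : g (update x i b) = g x := by
  obtain ⟨m, rfl⟩ := hσ.exists_pow_apply_eq_of_support_eq_univ hsupp (x i) b
  rw [← Equiv.piCongrRight_ite_pow_apply]
  exact apply_pow_apply_of_invariant hg m x

theorem AddChar.mul_map_neg_apply_eq {A ι R : Type*} [AddCommGroup A] [CommMonoid R]
    (χ : AddChar A R) {f : ι → A} {ψ : ι → R} {p : ι → ι}
    (hψ : ∀ y, ψ (p y) = χ (f (p y) - f y) * ψ y) (y : ι) :
    ψ (p y) * χ (-f (p y)) = ψ y * χ (-f y) := by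
  rw [hψ, mul_right_comm, ← AddChar.map_add_eq_mul, mul_comm]
  congr 2
  abel

theorem exists_norm_eq_one_eq_smul_div_sqrt_card {ι : Type*} [Fintype ι] {ψ u : ι → ℂ}
    (hu : ∀ x, ‖u x‖ = 1) (hψ : ∑ x, Complex.normSq (ψ x) = 1) {c₀ : ℂ}
    (hψu : ψ = fun x => c₀ * u x) :
    ∃ c : ℂ, ‖c‖ = 1 ∧ ψ = c • fun x => u x / (√(Fintype.card ι) : ℂ) := by
  have hc₀ : ‖c₀‖ * √(Fintype.card ι) = 1 := by
    simp only [hψu, Complex.normSq_eq_norm_sq, norm_mul, hu, mul_one, Finset.sum_const,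
      Finset.card_univ, nsmul_eq_mul] at hψ
    rw [← Real.sqrt_sq (norm_nonneg c₀), ← Real.sqrt_mul (sq_nonneg _), mul_comm, hψ,
      Real.sqrt_one]
  have hsqrt : (√(Fintype.card ι) : ℂ) ≠ 0 :=
    Complex.ofReal_ne_zero.mpr (right_ne_zero_of_mul_eq_one hc₀)
  refine ⟨c₀ * √(Fintype.card ι), ?_, ?_⟩
  · rw [norm_mul, Complex.norm_real, Real.norm_of_nonneg (Real.sqrt_nonneg _), hc₀]
  · rw [hψu]
    funext x
    simp only [Pi.smul_apply, smul_eq_mul]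
    field_simp

theorem ffe_state_unique_stabilized_general (d n : ℕ) [NeZero d]
    (κ : Fin n → Equiv.Perm (ZMod d))
    (hκ : ∀ i, (κ i).IsCycle ∧ (κ i).support = Finset.univ)
    (f : (Fin n → ZMod d) → ZMod d) (ψ : (Fin n → ZMod d) → ℂ)
    (hψ : ∑ x : Fin n → ZMod d, Complex.normSq (ψ x) = 1) :
    let ω : ℂ := Complex.exp (2 * (Real.pi : ℂ) * Complex.I / (d : ℂ))
    let K : Fin n → Equiv.Perm (Fin n → ZMod d) := fun i =>
      Equiv.piCongrRight (fun j => if j = i then κ i else Equiv.refl (ZMod d))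
    let X : Equiv.Perm (Fin n → ZMod d) → Matrix (Fin n → ZMod d) (Fin n → ZMod d) ℂ :=
      fun π => Matrix.of fun x y => if x = π y then (1 : ℂ) else 0
    let Z : ((Fin n → ZMod d) → ZMod d) → Matrix (Fin n → ZMod d) (Fin n → ZMod d) ℂ :=
      fun h => Matrix.diagonal fun x => ω ^ (h x).val
    (∀ i, (X (K i) * Z (fun x => f (K i x) - f x)).mulVec ψ = ψ) →
      ∃ c : ℂ, ‖c‖ = 1 ∧
        ψ = c • (fun x => ω ^ (f x).val / (Real.sqrt (d ^ n) : ℂ)) := by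
  intro ω K X Z hstab
  have hω : IsPrimitiveRoot ω d := Complex.isPrimitiveRoot_exp d (NeZero.ne d)
  let χ := AddChar.zmodChar d hω.pow_eq_one
  have hψK : ∀ i y, ψ (K i y) = χ (f (K i y) - f y) * ψ y := fun i y =>
    calc ψ (K i y) = (X (K i) * Z fun x => f (K i x) - f x).mulVec ψ (K i y) := by rw [hstab i]
      _ = (Z fun x => f (K i x) - f x).mulVec ψ y := by
        rw [← Matrix.mulVec_mulVec]; exact Matrix.mulVec_of_ite_perm_apply _ _ _
      _ = χ (f (K i y) - f y) * ψ y := Matrix.mulVec_diagonal _ _ _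
  have hφ : ∀ x y, ψ x * χ (-f x) = ψ y * χ (-f y) :=
    apply_eq_apply_of_update_invariant fun x i b =>
      apply_update_eq_of_invariant_piCongrRight_ite (g := fun x => ψ x * χ (-f x)) (hκ i).1
        (hκ i).2 (χ.mul_map_neg_apply_eq (hψK i)) x b
  obtain ⟨c₀, hψc₀⟩ : ∃ c₀, ψ = fun x => c₀ * ω ^ (f x).val := by
    refine ⟨ψ 0 * χ (-f 0), funext fun x => ?_⟩
    change ψ x = ψ 0 * χ (-f 0) * χ (f x)
    rw [← hφ x 0, mul_assoc, ← AddChar.map_add_eq_mul, neg_add_cancel, AddChar.map_zero_eq_one,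
      mul_one]
  have hcard : (Fintype.card (Fin n → ZMod d) : ℝ) = (d : ℝ) ^ n := by
    simp [ZMod.card]
  rw [← hcard]
  exact exists_norm_eq_one_eq_smul_div_sqrt_card
    (fun x => by rw [norm_pow, hω.norm'_eq_one (NeZero.ne d), one_pow]) hψ hψc₀

theorem ffe_state_unique_stabilized (d n : ℕ) [NeZero d] (hd : 2 ≤ d)
    (κ : Fin n → Equiv.Perm (ZMod d))
    (hκ : ∀ i, (κ i).IsCycle ∧ (κ i).support = Finset.univ)
    (f : (Fin n → ZMod d) → ZMod d) (ψ : (Fin n → ZMod d) → ℂ)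
    (hψ : ∑ x : Fin n → ZMod d, Complex.normSq (ψ x) = 1) :
    let ω : ℂ := Complex.exp (2 * (Real.pi : ℂ) * Complex.I / (d : ℂ))
    let K : Fin n → Equiv.Perm (Fin n → ZMod d) := fun i =>
      Equiv.piCongrRight (fun j => if j = i then κ i else Equiv.refl (ZMod d))
    let X : Equiv.Perm (Fin n → ZMod d) → Matrix (Fin n → ZMod d) (Fin n → ZMod d) ℂ :=
      fun π => Matrix.of fun x y => if x = π y then (1 : ℂ) else 0
    let Z : ((Fin n → ZMod d) → ZMod d) → Matrix (Fin n → ZMod d) (Fin n → ZMod d) ℂ :=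
      fun h => Matrix.diagonal fun x => ω ^ (h x).val
    (∀ i, (X (K i) * Z (fun x => f (K i x) - f x)).mulVec ψ = ψ) →
      ∃ c : ℂ, ‖c‖ = 1 ∧
        ψ = c • (fun x => ω ^ (f x).val / (Real.sqrt (d ^ n) : ℂ)) :=
  ffe_state_unique_stabilized_general d n κ hκ f ψ hψ
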